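/- arXiv:1302.4359 — 3 statements merged into one kernel-verified Lean document; each statement's English description precedes it below -/
import Mathlib

section
/- The infinite binary word w = (01)¹ 1 (10)² 0 (01)³ 1 (10)⁴ 0 … (01)^{2i−1} 1 (10)^{2i} 0 … has bounded width but is not bounded weakly abelian periodic (i.e., it admits no WAP factorization with uniformly bounded block lengths). -/
open Filter Topology

/-- Number of 1's (`true`) in the length-`n` prefix of the infinite binary word `w`. -/
def ones (w : ℕ → Bool) (n : ℕ) : ℕ :=
  ((Finset.range n).filter (fun i => w i = true)).card

/-- Number of 0's (`false`) in the length-`n` prefix of `w`. -/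
def zeros (w : ℕ → Bool) (n : ℕ) : ℕ := n - ones w n

/-- The graphic of `w`: `g_w(n) = |pref_n(w)|₁ - |pref_n(w)|₀`. -/
def graphic (w : ℕ → Bool) (n : ℕ) : ℤ := (ones w n : ℤ) - (zeros w n : ℤ)

/-- `w` is weakly abelian periodic with frequency `ρ` of the letter 1 in the blocks:
there is a factorization `w = v₀v₁v₂⋯` (cut points `k 0 < k 1 < ⋯`, with `v₀` the
prefix of length `k 0`) such that each block `vᵢ = w[k i, k (i+1))`, `i ≥ 1`,
has frequency `ρ` of the letter 1. -/
def WAPwith (w : ℕ → Bool) (ρ : ℚ) : Prop :=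
  ∃ k : ℕ → ℕ, StrictMono k ∧
    ∀ i : ℕ, ((ones w (k (i+1)) : ℚ) - (ones w (k i) : ℚ))
      = ρ * ((k (i+1) : ℚ) - (k i : ℚ))

/-- `w` is weakly abelian periodic. -/
def WAP (w : ℕ → Bool) : Prop := ∃ ρ : ℚ, WAPwith w ρ

/-- `w` is bounded weakly abelian periodic: WAP with blocks of uniformly bounded length. -/
def BoundedWAP (w : ℕ → Bool) : Prop :=
  ∃ (ρ : ℚ) (k : ℕ → ℕ) (C : ℕ), StrictMono k ∧ (∀ i, k (i+1) - k i ≤ C) ∧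
    ∀ i : ℕ, ((ones w (k (i+1)) : ℚ) - (ones w (k i) : ℚ))
      = ρ * ((k (i+1) : ℚ) - (k i : ℚ))

/-- `w` has bounded width: its graphic lies between two parallel lines with
rational coefficients. -/
def BoundedWidth (w : ℕ → Bool) : Prop :=
  ∃ a b₁ b₂ : ℚ, ∀ n : ℕ,
    a * n + b₁ ≤ (graphic w n : ℚ) ∧ (graphic w n : ℚ) ≤ a * n + b₂

/-- The `i`-th block of the word `(01)¹1 (10)²0 (01)³1 (10)⁴0 ⋯`:
for odd `i` it is `(01)^i 1`, for even `i` it is `(10)^i 0`; it has length `2i+1`. -/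
def exBlock (i : ℕ) : List Bool :=
  if i % 2 = 1 then (List.replicate i [false, true]).flatten ++ [true]
  else (List.replicate i [true, false]).flatten ++ [false]


/-!
Position `n` lies in block `j = ⌊√(n+1)⌋`, and the graphic there is `0` or `-1` when `j` is
odd and `1` or `2` when `j` is even; in particular it is bounded, and its sign determines the
parity of the block. In a factorization whose blocks all have frequency `ρ`, the graphic at the
cut points grows like `(2ρ - 1)` times the position, so boundedness forces `ρ = 1/2` and the
graphic is constant on the cut points. Hence all cut points lie in blocks of one parity, which is
impossible when the gaps are bounded by `C`, since blocks of the other parity get longer than `C`.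
-/
section Graphic

variable (w : ℕ → Bool)

lemma ones_succ (n : ℕ) : ones w (n + 1) = ones w n + if w n then 1 else 0 := by
  rw [ones, ones, Finset.range_add_one, Finset.filter_insert]
  split_ifs with h
  · exact Finset.card_insert_of_notMem (by simp)
  · rfl

lemma ones_le (n : ℕ) : ones w n ≤ n :=
  (Finset.card_filter_le _ _).trans_eq (Finset.card_range n)

lemma graphic_eq_two_mul_ones_sub (n : ℕ) : graphic w n = 2 * ones w n - n := by
  rw [graphic, zeros, Nat.cast_sub (ones_le w n)]
  ring

lemma graphic_zero : graphic w 0 = 0 := by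
  simp [graphic_eq_two_mul_ones_sub, ones]

lemma graphic_succ (n : ℕ) : graphic w (n + 1) = graphic w n + if w n then 1 else -1 := by
  rw [graphic_eq_two_mul_ones_sub, graphic_eq_two_mul_ones_sub, ones_succ]
  split_ifs <;> push_cast <;> ring

lemma boundedWidth_of_le_of_le {a b : ℤ} (hlo : ∀ n, a ≤ graphic w n)
    (hhi : ∀ n, graphic w n ≤ b) : BoundedWidth w :=
  ⟨0, a, b, fun n => ⟨by simpa using (Int.cast_le (R := ℚ)).2 (hlo n),
    by simpa using (Int.cast_le (R := ℚ)).2 (hhi n)⟩⟩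

lemma graphic_sub_graphic_of_frequency {ρ : ℚ} {k : ℕ → ℕ}
    (hρ : ∀ i, (ones w (k (i + 1)) : ℚ) - ones w (k i) = ρ * ((k (i + 1) : ℚ) - k i))
    (i : ℕ) : (graphic w (k i) : ℚ) - graphic w (k 0) = (2 * ρ - 1) * ((k i : ℚ) - k 0) := by
  induction i with
  | zero => simp
  | succ i ih =>
    simp only [graphic_eq_two_mul_ones_sub, Int.cast_sub, Int.cast_mul, Int.cast_ofNat,
      Int.cast_natCast] at ih ⊢
    linear_combination ih + 2 * hρ i

lemma graphic_apply_eq_of_frequency_of_bounded {ρ : ℚ} {k : ℕ → ℕ} (hk : StrictMono k)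
    (hρ : ∀ i, (ones w (k (i + 1)) : ℚ) - ones w (k i) = ρ * ((k (i + 1) : ℚ) - k i))
    {a b : ℤ} (hlo : ∀ n, a ≤ graphic w n) (hhi : ∀ n, graphic w n ≤ b) (i : ℕ) :
    graphic w (k i) = graphic w (k 0) := by
  suffices hρ_half : 2 * ρ - 1 = 0 by
    have := graphic_sub_graphic_of_frequency w hρ i
    rw [hρ_half, zero_mul, sub_eq_zero] at this
    exact_mod_cast this
  by_contra hne
  have hpos : 0 < |2 * ρ - 1| := abs_pos.2 hne
  obtain ⟨N, hN⟩ := exists_nat_gt ((b - a) / |2 * ρ - 1|)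
  have hgap : (N : ℚ) ≤ k N - k 0 := by
    rw [le_sub_iff_add_le]
    exact_mod_cast hk.add_le_nat N 0
  have hdiff : |(graphic w (k N) : ℚ) - graphic w (k 0)| ≤ b - a := by
    have : |graphic w (k N) - graphic w (k 0)| ≤ b - a :=
      abs_sub_le_iff.2 ⟨by linarith [hhi (k N), hlo (k 0)], by linarith [hhi (k 0), hlo (k N)]⟩
    exact_mod_cast this
  rw [graphic_sub_graphic_of_frequency w hρ, abs_mul,
    abs_of_nonneg ((Nat.cast_nonneg N).trans hgap)] at hdiff
  rw [div_lt_iff₀ hpos] at hN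
  nlinarith

end Graphic

lemma StrictMono.exists_apply_mem_Icc {k : ℕ → ℕ} (hk : StrictMono k) {C : ℕ}
    (hC : ∀ i, k (i + 1) - k i ≤ C) {m : ℕ} (hm : k 0 ≤ m) :
    ∃ i, k i ∈ Set.Icc m (m + C) := by
  classical
  have hex : ∃ i, m ≤ k i := ⟨m, hk.id_le m⟩
  refine ⟨Nat.find hex, Nat.find_spec hex, ?_⟩
  rcases h : Nat.find hex with _ | i
  · have := Nat.find_spec hex
    rw [h] at this
    omega
  · have := Nat.find_min hex (show i < Nat.find hex by omega)
    have := hC i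
    omega

/-- Block `j` of the word occupies the positions `j² - 1, …, j² + 2j - 1`; position `n` lies in
block `blockIndex n` at offset `blockOffset n`. -/
def blockIndex (n : ℕ) : ℕ := Nat.sqrt (n + 1)

def blockOffset (n : ℕ) : ℕ := n + 1 - blockIndex n ^ 2

lemma blockIndex_eq_iff {n j : ℕ} :
    blockIndex n = j ↔ j ^ 2 ≤ n + 1 ∧ n + 1 ≤ j ^ 2 + 2 * j := by
  rw [blockIndex, eq_comm, Nat.eq_sqrt', add_sq, mul_one, one_pow, Nat.lt_add_one_iff]

lemma one_le_blockIndex (n : ℕ) : 1 ≤ blockIndex n :=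
  Nat.sqrt_pos.2 n.succ_pos

lemma blockIndex_sq_le (n : ℕ) : blockIndex n ^ 2 ≤ n + 1 :=
  (blockIndex_eq_iff.1 rfl).1

lemma lt_blockIndex_add_one_sq (n : ℕ) : n + 1 < (blockIndex n + 1) ^ 2 :=
  Nat.lt_succ_sqrt' _

lemma blockOffset_le (n : ℕ) : blockOffset n ≤ 2 * blockIndex n := by
  have := (blockIndex_eq_iff.1 (rfl : blockIndex n = _)).2
  unfold blockOffset
  omega

lemma blockIndex_sq_sub_one_add_blockOffset (n : ℕ) :
    blockIndex n ^ 2 - 1 + blockOffset n = n := by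
  have := blockIndex_sq_le n
  have : 1 ≤ blockIndex n ^ 2 := Nat.one_le_pow _ _ (one_le_blockIndex n)
  unfold blockOffset
  omega

lemma blockIndex_blockOffset_succ_of_lt {n : ℕ} (h : blockOffset n < 2 * blockIndex n) :
    blockIndex (n + 1) = blockIndex n ∧ blockOffset (n + 1) = blockOffset n + 1 := by
  have h₁ := blockIndex_sq_le n
  unfold blockOffset at h ⊢
  have h₂ : blockIndex (n + 1) = blockIndex n := blockIndex_eq_iff.2 (by omega)
  rw [h₂]
  omega

lemma blockIndex_blockOffset_succ_of_eq {n : ℕ} (h : blockOffset n = 2 * blockIndex n) :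
    blockIndex (n + 1) = blockIndex n + 1 ∧ blockOffset (n + 1) = 0 := by
  have h₁ := blockIndex_sq_le n
  have hsq : (blockIndex n + 1) ^ 2 = blockIndex n ^ 2 + 2 * blockIndex n + 1 := by ring
  unfold blockOffset at h ⊢
  have h₂ : blockIndex (n + 1) = blockIndex n + 1 := blockIndex_eq_iff.2 (by omega)
  rw [h₂]
  omega

lemma List.getD_flatten_replicate {α : Type*} (l : List α) (d : α) {j r : ℕ}
    (hr : r < j * l.length) : (List.replicate j l).flatten.getD r d = l.getD (r % l.length) d := by
  induction j generalizing r with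
  | zero => simp at hr
  | succ j ih =>
    rw [List.replicate_succ, List.flatten_cons]
    by_cases hrl : r < l.length
    · rw [List.getD_append _ _ _ _ hrl, Nat.mod_eq_of_lt hrl]
    · rw [not_lt] at hrl
      rw [List.getD_append_right _ _ _ _ hrl, ih (by rw [Nat.succ_mul] at hr; omega),
        ← Nat.mod_eq_sub_mod hrl]

lemma exBlock_getD_of_lt {j r : ℕ} (hr : r < 2 * j) :
    (exBlock j).getD r false = decide (r % 2 = j % 2) := by
  have hlen : r < j * 2 := by omega
  unfold exBlock
  split_ifs with hj <;>
  · rw [List.getD_append _ _ _ _ (by simpa using hlen),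
      List.getD_flatten_replicate _ _ (by simpa using hlen)]
    rcases Nat.mod_two_eq_zero_or_one r with h | h <;> simp [h, hj] <;> omega

lemma exBlock_getD_two_mul (j : ℕ) : (exBlock j).getD (2 * j) false = decide (j % 2 = 1) := by
  unfold exBlock
  split_ifs with hj <;>
  · rw [List.getD_append_right _ _ _ _ (by simp [mul_comm])]
    simp [hj, mul_comm]

/-- The graphic of the word at offset `r` of block `j`. -/
def exGraphic (j r : ℕ) : ℤ := if j % 2 = 1 then -(r % 2 : ℕ) else 1 + (r % 2 : ℕ)

lemma neg_one_le_exGraphic (j r : ℕ) : -1 ≤ exGraphic j r := by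
  unfold exGraphic; split_ifs <;> omega

lemma exGraphic_le_two (j r : ℕ) : exGraphic j r ≤ 2 := by
  unfold exGraphic; split_ifs <;> omega

lemma exGraphic_pos_iff {j r : ℕ} : 0 < exGraphic j r ↔ j % 2 = 0 := by
  unfold exGraphic; split_ifs <;> omega

lemma exGraphic_add (j r : ℕ) :
    exGraphic j r + (if decide (r % 2 = j % 2) then 1 else -1) = exGraphic j (r + 1) := by
  unfold exGraphic; split_ifs <;> simp_all <;> omega

lemma exGraphic_two_mul_add (j : ℕ) :
    exGraphic j (2 * j) + (if decide (j % 2 = 1) then 1 else -1) = exGraphic (j + 1) 0 := by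
  unfold exGraphic; split_ifs <;> simp_all <;> omega

lemma apply_eq_exBlock_getD {w : ℕ → Bool}
    (hw : ∀ i, 1 ≤ i → ∀ l, l < 2 * i + 1 → w (i ^ 2 - 1 + l) = (exBlock i).getD l false)
    (n : ℕ) : w n = (exBlock (blockIndex n)).getD (blockOffset n) false := by
  have := hw _ (one_le_blockIndex n) _ (Nat.lt_succ_of_le (blockOffset_le n))
  rwa [blockIndex_sq_sub_one_add_blockOffset] at this

lemma graphic_eq_exGraphic {w : ℕ → Bool}
    (hw : ∀ i, 1 ≤ i → ∀ l, l < 2 * i + 1 → w (i ^ 2 - 1 + l) = (exBlock i).getD l false)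
    (n : ℕ) : graphic w n = exGraphic (blockIndex n) (blockOffset n) := by
  induction n with
  | zero => simp [graphic_zero, exGraphic, blockOffset, blockIndex]
  | succ n ih =>
    rw [graphic_succ, ih, apply_eq_exBlock_getD hw]
    rcases (blockOffset_le n).lt_or_eq with h | h
    · obtain ⟨hj, hr⟩ := blockIndex_blockOffset_succ_of_lt h
      rw [hj, hr, exBlock_getD_of_lt h, exGraphic_add]
    · obtain ⟨hj, hr⟩ := blockIndex_blockOffset_succ_of_eq h
      rw [hj, hr, h, exBlock_getD_two_mul, exGraphic_two_mul_add]

/-- The word `w = (01)¹ 1 (10)² 0 (01)³ 1 (10)⁴ 0 ⋯ (01)^{2i-1} 1 (10)^{2i} 0 ⋯`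
(block `i` starts at position `i² - 1`, 0-indexed) has bounded width but is not
bounded weakly abelian periodic. -/
theorem boundedWidth_not_boundedWAP (w : ℕ → Bool)
    (hw : ∀ i, 1 ≤ i → ∀ l, l < 2 * i + 1 → w (i ^ 2 - 1 + l) = (exBlock i).getD l false) :
    BoundedWidth w ∧ ¬ BoundedWAP w := by
  have hg := graphic_eq_exGraphic hw
  have hlo (n : ℕ) : -1 ≤ graphic w n := hg n ▸ neg_one_le_exGraphic _ _
  have hhi (n : ℕ) : graphic w n ≤ 2 := hg n ▸ exGraphic_le_two _ _
  refine ⟨boundedWidth_of_le_of_le w hlo hhi, ?_⟩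
  rintro ⟨ρ, k, C, hk, hC, hρ⟩
  -- a block of the other parity than the one containing `k 0`, longer than `C`
  obtain ⟨j, hj⟩ : ∃ j, j = blockIndex (k 0) + 2 * C + 1 := ⟨_, rfl⟩
  have hk₀ : k 0 + 1 < j ^ 2 :=
    (lt_blockIndex_add_one_sq _).trans_le (Nat.pow_le_pow_left (by omega) 2)
  obtain ⟨i, hi⟩ := hk.exists_apply_mem_Icc hC (m := j ^ 2 - 1) (by omega)
  have hki : blockIndex (k i) = j := blockIndex_eq_iff.2 (by simp only [Set.mem_Icc] at hi; omega)
  have hpos := congrArg (0 < ·) (graphic_apply_eq_of_frequency_of_bounded w hk hρ hlo hhi i)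
  simp only [hg, hki, exGraphic_pos_iff, eq_iff_iff] at hpos
  omega
end

section
/- The paperfolding word is not of bounded width: for every k, taking n = 2^k + 2^{k−2} + … + 2^{k−2⌊k/2⌋}, one has |pref_n(w)|₀ − |pref_n(w)|₁ = k + 1; hence the difference |pref_n(w)|₀ − |pref_n(w)|₁ is unbounded over n. -/
open Filter Topology

/-- Number of 1's among the first `n` letters `w 1, …, w n` of the (1-indexed)
infinite binary word `w`. -/
def onesP (w : ℕ → Bool) (n : ℕ) : ℕ :=
  ((Finset.range n).filter (fun i => w (i + 1) = true)).card

/-- `w` (1-indexed) is the paperfolding word, i.e. the Toeplitz word with pattern `0?1?`. -/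
def IsPaperfolding (w : ℕ → Bool) : Prop :=
  (∀ m : ℕ, w (4 * m + 1) = false) ∧ (∀ m : ℕ, w (4 * m + 3) = true) ∧
    (∀ m : ℕ, 1 ≤ m → w (2 * m) = w m)

lemma onesP_le (w : ℕ → Bool) (n : ℕ) : onesP w n ≤ n :=
  (Finset.card_filter_le _ _).trans_eq (Finset.card_range n)

lemma onesP_succ (w : ℕ → Bool) (n : ℕ) :
    onesP w (n + 1) = onesP w n + (if w (n + 1) = true then 1 else 0) := by
  unfold onesP
  rw [Finset.range_add_one, Finset.filter_insert]
  split
  · rw [Finset.card_insert_of_notMem (by simp)]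
  · rw [add_zero]

lemma onesP_double (w : ℕ → Bool) (hw : IsPaperfolding w) (n : ℕ) :
    onesP w (2 * n) = onesP w n + n / 2 := by
  obtain ⟨h1, h3, hd⟩ := hw
  induction n with
  | zero => simp [onesP]
  | succ n ih =>
    have h2 : 2 * (n + 1) = (2 * n + 1) + 1 := by ring
    have hwn : w (2 * n + 1 + 1) = w (n + 1) := by
      rw [show 2 * n + 1 + 1 = 2 * (n + 1) by ring]
      exact hd (n + 1) (by omega)
    rw [h2, onesP_succ, onesP_succ, ih, onesP_succ, hwn]
    rcases Nat.even_or_odd n with ⟨t, ht⟩ | ⟨t, ht⟩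
    · have hodd : w (2 * n + 1) = false := by
        rw [show 2 * n + 1 = 4 * t + 1 by omega]
        exact h1 t
      rw [hodd]
      simp only [Bool.false_eq_true, if_false]
      omega
    · have hodd : w (2 * n + 1) = true := by
        rw [show 2 * n + 1 = 4 * t + 3 by omega]
        exact h3 t
      rw [hodd]
      simp only [if_true]
      omega

/-- The partial sums `2^k + 2^(k-2) + ⋯`. -/
def Spf (k : ℕ) : ℕ := ∑ j ∈ Finset.range (k / 2 + 1), 2 ^ (k - 2 * j)

lemma Spf_step (k : ℕ) : Spf (k + 2) = 4 * Spf k + 2 ^ (k % 2) := by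
  unfold Spf
  rw [show (k + 2) / 2 + 1 = (k / 2 + 1) + 1 by omega, Finset.sum_range_succ,
    Finset.mul_sum]
  congr 1
  · apply Finset.sum_congr rfl
    intro j hj
    simp only [Finset.mem_range] at hj
    rw [show k + 2 - 2 * j = (k - 2 * j) + 2 by omega, pow_add]
    ring
  · congr 1
    omega

lemma onesP_four (w : ℕ → Bool) (hw : IsPaperfolding w) (m : ℕ) :
    onesP w (4 * m + 1) = onesP w m + m / 2 + m := by
  have h4 : onesP w (4 * m) = onesP w m + m / 2 + m := by
    rw [show 4 * m = 2 * (2 * m) by ring, onesP_double w hw, onesP_double w hw]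
    omega
  rw [onesP_succ, h4, show 4 * m + 1 = 4 * m + 1 from rfl]
  rw [hw.1 m]
  simp

lemma key (w : ℕ → Bool) (hw : IsPaperfolding w) :
    ∀ k : ℕ, ((Spf k : ℤ) - 2 * onesP w (Spf k) = k + 1) ∧ Spf k % 2 = (k + 1) % 2 := by
  intro k
  induction k using Nat.strong_induction_on with
  | _ k ih =>
    match k with
    | 0 =>
      have h0 : Spf 0 = 1 := by simp [Spf]
      have hw1 : w 1 = false := hw.1 0
      rw [h0]
      have : onesP w 1 = 0 := by
        rw [show (1 : ℕ) = 0 + 1 from rfl, onesP_succ, hw1]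
        simp [onesP]
      rw [this]
      norm_num
    | 1 =>
      have h0 : Spf 1 = 2 := by simp [Spf]
      have hw1 : w 1 = false := hw.1 0
      have hw2 : w 2 = false := by
        rw [show (2 : ℕ) = 2 * 1 from rfl, hw.2.2 1 le_rfl, hw1]
      rw [h0]
      have : onesP w 2 = 0 := by
        rw [show (2 : ℕ) = 1 + 1 from rfl, onesP_succ, hw2,
          show (1 : ℕ) = 0 + 1 from rfl, onesP_succ, hw1]
        simp [onesP]
      rw [this]
      norm_num
    | (k + 2) =>
      obtain ⟨hD, hp⟩ := ih k (by omega)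
      set m := Spf k with hm
      rcases Nat.even_or_odd k with ⟨t, ht⟩ | ⟨t, ht⟩
      · -- k even, m odd, Spf (k+2) = 4m + 1
        have hk2 : k % 2 = 0 := by omega
        have hmo : m % 2 = 1 := by omega
        have hstep : Spf (k + 2) = 4 * m + 1 := by
          rw [Spf_step, hk2]; ring
        have ho : onesP w (4 * m + 1) = onesP w m + m / 2 + m :=
          onesP_four w hw m
        constructor
        · rw [hstep, ho]
          push_cast
          omega
        · rw [hstep]; omega
      · -- k odd, m even, Spf (k+2) = 4m + 2
        have hk2 : k % 2 = 1 := by omega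
        have hme : m % 2 = 0 := by omega
        have hstep : Spf (k + 2) = 4 * m + 2 := by
          rw [Spf_step, hk2]; ring
        have hw42 : w (4 * m + 2) = false := by
          rw [show 4 * m + 2 = 2 * (2 * m + 1) by ring, hw.2.2 (2 * m + 1) (by omega),
            show 2 * m + 1 = 4 * (m / 2) + 1 by omega]
          exact hw.1 _
        have ho : onesP w (4 * m + 2) = onesP w m + m / 2 + m := by
          rw [show 4 * m + 2 = (4 * m + 1) + 1 from rfl, onesP_succ,
            show 4 * m + 1 + 1 = 4 * m + 2 from rfl, hw42, onesP_four w hw]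
          simp
        constructor
        · rw [hstep, ho]
          push_cast
          omega
        · rw [hstep]; omega

/-- The paperfolding word is not of bounded width: for every `k ≥ 1`, taking
`n = 2^k + 2^{k-2} + ⋯ + 2^{k-2⌊k/2⌋}`, one has `|pref_n(w)|₀ - |pref_n(w)|₁ = k + 1`;
hence `|pref_n(w)|₀ - |pref_n(w)|₁` is unbounded over `n`. -/
theorem paperfolding_not_boundedWidth (w : ℕ → Bool) (hw : IsPaperfolding w) :
    (∀ k : ℕ, 1 ≤ k →
      (((∑ j ∈ Finset.range (k / 2 + 1), 2 ^ (k - 2 * j)) -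
          onesP w (∑ j ∈ Finset.range (k / 2 + 1), 2 ^ (k - 2 * j)) : ℕ) : ℤ) -
        (onesP w (∑ j ∈ Finset.range (k / 2 + 1), 2 ^ (k - 2 * j)) : ℤ) = k + 1) ∧
    (∀ C : ℤ, ∃ n : ℕ, ((n - onesP w n : ℕ) : ℤ) - (onesP w n : ℤ) > C) := by
  constructor
  · intro k _
    have hk := (key w hw k).1
    have hle := onesP_le w (Spf k)
    show ((Spf k - onesP w (Spf k) : ℕ) : ℤ) - (onesP w (Spf k) : ℤ) = k + 1
    rw [Nat.cast_sub hle]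
    linarith
  · intro C
    refine ⟨Spf (C.toNat + 1), ?_⟩
    have hk := (key w hw (C.toNat + 1)).1
    have hle := onesP_le w (Spf (C.toNat + 1))
    rw [Nat.cast_sub hle]
    have : C ≤ (C.toNat : ℤ) := Int.self_le_toNat C
    push_cast at hk
    linarith
end

section
/- Key lemma for WAP of morphic fixed points: with φ, w, g, Δ, A, t, j as above (g_{φ(1)}(j) = t), assume Δ·(A−c)/(−b) + t ≥ A. Then for every position m with w_m = 1 and g_w(m) ≥ A, one also has w_{k(m−1)+j} = 1 and g_w(k(m−1)+j) ≥ A. Consequently there are infinitely many positions n with g_w(n) ≥ A. -/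
open Filter Topology

/-- The graphic of the finite word `u` with vectors `v₀ = (1,-b)`, `v₁ = (1,c)`:
`g_u(n) = c·|pref_n(u)|₁ - b·|pref_n(u)|₀`. -/
def listG (b c : ℕ) (u : List Bool) (n : ℕ) : ℤ :=
  (c : ℤ) * ((u.take n).count true) - (b : ℤ) * ((u.take n).count false)

/-- The graphic of the infinite word `w` with vectors `v₀ = (1,-b)`, `v₁ = (1,c)`:
`g_w(n) = c·|pref_n(w)|₁ - b·|pref_n(w)|₀`. -/
def gW (b c : ℕ) (w : ℕ → Bool) (n : ℕ) : ℤ :=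
  (c : ℤ) * (ones w n) - (b : ℤ) * (zeros w n)

/-- `w` is a fixed point of the `k`-uniform binary morphism `0 ↦ φ0`, `1 ↦ φ1`:
the `n`-th letter of `w` is the `(n mod k)`-th letter of the image of the
`(n div k)`-th letter of `w`. -/
def IsFixedPoint (φ0 φ1 : List Bool) (k : ℕ) (w : ℕ → Bool) : Prop :=
  ∀ n : ℕ, w n = (if w (n / k) = true then φ1 else φ0).getD (n % k) false

/-- A nonnegative square matrix is primitive if some power of it is positive.
A binary morphism is primitive iff its incidence matrix is. -/
def MatPrimitive (M : Matrix (Fin 2) (Fin 2) ℕ) : Prop :=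
  ∃ m : ℕ, ∀ i j : Fin 2, 0 < (M ^ m) i j


section MKLAux

lemma mkl_ones_le (w : ℕ → Bool) (n : ℕ) : ones w n ≤ n := by
  simpa [ones] using (Finset.card_filter_le (Finset.range n) _)

lemma mkl_ones_succ (w : ℕ → Bool) (n : ℕ) :
    ones w (n + 1) = ones w n + (if w n then 1 else 0) := by
  unfold ones
  rw [Finset.range_add_one, Finset.filter_insert]
  by_cases h : w n <;> simp [h, Finset.card_insert_of_notMem]

lemma mkl_zeros_cast (w : ℕ → Bool) (n : ℕ) : (zeros w n : ℤ) = n - ones w n := by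
  have := mkl_ones_le w n
  simp only [zeros]; omega

lemma mkl_gW_succ (b c : ℕ) (w : ℕ → Bool) (n : ℕ) :
    gW b c w (n + 1) = gW b c w n + (if w n then (c:ℤ) else -(b:ℤ)) := by
  unfold gW
  rw [mkl_zeros_cast, mkl_zeros_cast, mkl_ones_succ]
  by_cases h : w n <;> simp [h] <;> ring

lemma mkl_listG_succ (b c : ℕ) (u : List Bool) (i : ℕ) (h : i < u.length) :
    listG b c u (i+1) = listG b c u i + (if u.getD i false then (c:ℤ) else -(b:ℤ)) := by
  unfold listG
  rw [List.take_succ, List.getElem?_eq_getElem h, List.getD_eq_getElem u false h]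
  cases hv : u[i] <;> simp [hv, List.count_append] <;> ring

lemma mkl_count_bool (l : List Bool) : l.count true + l.count false = l.length := by
  induction l with
  | nil => simp
  | cons hd tl ih => cases hd <;> simp [List.count_cons] <;> omega

lemma mkl_block (φ0 φ1 : List Bool) (k : ℕ) (w : ℕ → Bool)
    (hfix : IsFixedPoint φ0 φ1 k w) (hk0 : 0 < k) (p r : ℕ) (hr : r < k) :
    w (k * p + r) = (if w p = true then φ1 else φ0).getD r false := by
  have h := hfix (k * p + r)
  rwa [Nat.mul_add_div hk0, Nat.div_eq_of_lt hr, Nat.add_zero, Nat.mul_add_mod,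
    Nat.mod_eq_of_lt hr] at h

lemma mkl_listG_full (b c : ℕ) (u : List Bool) :
    listG b c u u.length = (c:ℤ) * u.count true - (b:ℤ) * u.count false := by
  simp [listG]

lemma mkl_gW_zero (b c : ℕ) (w : ℕ → Bool) : gW b c w 0 = 0 := by
  simp [gW, ones, zeros]

lemma mkl_gW_block (φ0 φ1 : List Bool) (k b c : ℕ) (w : ℕ → Bool)
    (hfix : IsFixedPoint φ0 φ1 k w) (hk0 : 0 < k)
    (hlen0 : φ0.length = k) (hlen1 : φ1.length = k) (p : ℕ) :
    ∀ i : ℕ, i ≤ k →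
    gW b c w (k * p + i) = gW b c w (k * p) + listG b c (if w p = true then φ1 else φ0) i := by
  intro i hi
  induction i with
  | zero => simp [listG]
  | succ n ih =>
    have hn : n < k := lt_of_lt_of_le (Nat.lt_succ_self n) hi
    have hlen : n < (if w p = true then φ1 else φ0).length := by
      split <;> omega
    rw [show k * p + (n+1) = (k*p+n)+1 from rfl, mkl_gW_succ, ih (le_of_lt hn),
      mkl_block φ0 φ1 k w hfix hk0 p n hn, mkl_listG_succ b c _ n hlen]
    ring

lemma mkl_gW_mul (φ0 φ1 : List Bool) (k a b c d : ℕ) (w : ℕ → Bool)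
    (hfix : IsFixedPoint φ0 φ1 k w) (hk0 : 0 < k)
    (hlen0 : φ0.length = k) (hlen1 : φ1.length = k)
    (ha : φ0.count false = a) (hb : φ0.count true = b)
    (hc : φ1.count false = c) (hd : φ1.count true = d)
    (habcd : a + b = c + d) (m : ℕ) :
    gW b c w (k * m) = ((a:ℤ) - c) * gW b c w m := by
  induction m with
  | zero => simp [mkl_gW_zero]
  | succ n ih =>
    have h1 : gW b c w (k * (n+1))
        = gW b c w (k * n) + listG b c (if w n = true then φ1 else φ0) k := by
      have := mkl_gW_block φ0 φ1 k b c w hfix hk0 hlen0 hlen1 n k le_rfl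
      rw [show k * (n+1) = k * n + k from by ring]
      exact this
    have hdb : (d:ℤ) - b = (a:ℤ) - c := by
      have : (a:ℤ) + b = (c:ℤ) + d := by exact_mod_cast habcd
      linarith
    have hL1 : listG b c φ1 k = (c:ℤ) * d - (b:ℤ) * c := by
      have := mkl_listG_full b c φ1
      rwa [hlen1, hc, hd] at this
    have hL0 : listG b c φ0 k = (c:ℤ) * b - (b:ℤ) * a := by
      have := mkl_listG_full b c φ0
      rwa [hlen0, ha, hb] at this
    rw [h1, mkl_gW_succ]
    by_cases h : w n = true
    · rw [if_pos h, if_pos h, hL1]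
      linear_combination ih + (c:ℤ) * hdb
    · rw [if_neg h, if_neg h, hL0]
      linear_combination ih

end MKLAux

/-- Key lemma: with `Δ = g_{φ(0)}(k) < 0`, `A` and `t` the maxima of the graphics
of `φ(0)`, `φ(1)` at positions of the letter 1, and `j` a position realizing `t`,
if `Δ·(A-c)/(-b) + t ≥ A`, then whenever `w_m = 1` (1-indexed) and `g_w(m) ≥ A`,
also `w_{k(m-1)+j} = 1` and `g_w(k(m-1)+j) ≥ A`; consequently `g_w(n) ≥ A` for
infinitely many `n`. -/
theorem morphism_key_lemma (φ0 φ1 : List Bool) (k a b c d : ℕ)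
    (w : ℕ → Bool) (Δ A t : ℤ) (j : ℕ)
    (hk : 2 ≤ k) (hlen0 : φ0.length = k) (hlen1 : φ1.length = k)
    (ha : φ0.count false = a) (hb : φ0.count true = b)
    (hc : φ1.count false = c) (hd : φ1.count true = d)
    (hfix : IsFixedPoint φ0 φ1 k w) (hw0 : w 0 = false)
    (hΔdef : Δ = listG b c φ0 k) (hΔ : Δ < 0)
    (hAmem : ∃ i : ℕ, 1 ≤ i ∧ i ≤ k ∧ φ0.getD (i - 1) false = true ∧
      listG b c φ0 i = A)
    (hAub : ∀ i : ℕ, 1 ≤ i → i ≤ k → φ0.getD (i - 1) false = true →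
      listG b c φ0 i ≤ A)
    (hj : 1 ≤ j ∧ j ≤ k ∧ φ1.getD (j - 1) false = true ∧ listG b c φ1 j = t)
    (htub : ∀ i : ℕ, 1 ≤ i → i ≤ k → φ1.getD (i - 1) false = true →
      listG b c φ1 i ≤ t)
    (hineq : (Δ : ℚ) * ((A : ℚ) - (c : ℚ)) / (-(b : ℚ)) + (t : ℚ) ≥ (A : ℚ)) :
    (∀ m : ℕ, 1 ≤ m → w (m - 1) = true → gW b c w m ≥ A →
      w (k * (m - 1) + j - 1) = true ∧ gW b c w (k * (m - 1) + j) ≥ A) ∧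
    (∀ N : ℕ, ∃ n : ℕ, N ≤ n ∧ gW b c w n ≥ A) := by
  have hk0 : 0 < k := by omega
  have hab : b + a = k := by
    have := mkl_count_bool φ0; rw [ha, hb, hlen0] at this; omega
  have hcd : d + c = k := by
    have := mkl_count_bool φ1; rw [hc, hd, hlen1] at this; omega
  have habcd : a + b = c + d := by omega
  have hDval : Δ = (c:ℤ) * b - (b:ℤ) * a := by
    rw [hΔdef]
    have := mkl_listG_full b c φ0
    rwa [hlen0, ha, hb] at this
  have hb0 : 0 < b := by
    rcases Nat.eq_zero_or_pos b with h | h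
    · subst h; simp at hDval; omega
    · exact h
  have hbZ : (0:ℤ) < b := by exact_mod_cast hb0
  have hacZ : (c:ℤ) < a := by
    have h2 : (c:ℤ) * b - (b:ℤ) * a < 0 := hDval ▸ hΔ
    have h3 : (c:ℤ) * b < (a:ℤ) * b := by
      have := mul_comm (b:ℤ) (a:ℤ); linarith
    exact lt_of_mul_lt_mul_right h3 (le_of_lt hbZ)
  -- key inequality over ℤ
  have hbq : (b:ℚ) ≠ 0 := by
    have : (0:ℚ) < b := by exact_mod_cast hb0
    linarith
  have hDq : (Δ:ℚ) = -(b:ℚ) * ((a:ℚ) - c) := by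
    rw [hDval]; push_cast; ring
  have heq : (Δ:ℚ) * ((A:ℚ) - c) / (-(b:ℚ)) = ((a:ℚ) - c) * ((A:ℚ) - c) := by
    rw [hDq]
    field_simp
  rw [heq] at hineq
  have hkey : ((a:ℤ) - c) * (A - c) + t ≥ A := by exact_mod_cast hineq
  obtain ⟨hj1, hjk, hjφ, hjt⟩ := hj
  -- Part 1
  have hpart1 : ∀ m : ℕ, 1 ≤ m → w (m - 1) = true → gW b c w m ≥ A →
      w (k * (m - 1) + j - 1) = true ∧ gW b c w (k * (m - 1) + j) ≥ A := by
    intro m hm hwm hgA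
    set p := m - 1 with hp
    have hmp : m = p + 1 := by omega
    constructor
    · have hr : j - 1 < k := by omega
      have hblk := mkl_block φ0 φ1 k w hfix hk0 p (j - 1) hr
      rw [show k * p + j - 1 = k * p + (j - 1) from by omega, hblk, if_pos hwm]
      exact hjφ
    · have h1 := mkl_gW_block φ0 φ1 k b c w hfix hk0 hlen0 hlen1 p j hjk
      rw [if_pos hwm, hjt] at h1
      have h2 := mkl_gW_mul φ0 φ1 k a b c d w hfix hk0 hlen0 hlen1 ha hb hc hd habcd p
      have h3 : gW b c w m = gW b c w p + c := by
        have hs := mkl_gW_succ b c w p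
        rw [hwm] at hs
        rw [hmp, hs]
        simp
      have hgp : gW b c w p ≥ A - c := by
        rw [h3] at hgA; linarith
      have h4 : ((a:ℤ) - c) * (A - c) ≤ ((a:ℤ) - c) * gW b c w p :=
        mul_le_mul_of_nonneg_left hgp (by linarith)
      rw [h1, h2]
      linarith
  refine ⟨hpart1, ?_⟩
  -- Part 2
  have claim : ∀ q : ℕ, ∃ n : ℕ, q ≤ n ∧ 1 ≤ n ∧ w (n - 1) = true ∧ gW b c w n ≥ A := by
    intro q
    induction q with
    | zero =>
      obtain ⟨i0, hi1, hik, hiφ, hiA⟩ := hAmem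
      refine ⟨i0, Nat.zero_le _, hi1, ?_, ?_⟩
      · have hr : i0 - 1 < k := by omega
        have hblk := mkl_block φ0 φ1 k w hfix hk0 0 (i0 - 1) hr
        rw [Nat.mul_zero, Nat.zero_add, hw0] at hblk
        simp only [Bool.false_eq_true, if_false] at hblk
        rw [hblk]
        exact hiφ
      · have h1 := mkl_gW_block φ0 φ1 k b c w hfix hk0 hlen0 hlen1 0 i0 hik
        rw [Nat.mul_zero, Nat.zero_add, hw0] at h1
        simp only [Bool.false_eq_true, if_false] at h1
        rw [h1, mkl_gW_zero, hiA]; omega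
    | succ q ih =>
      obtain ⟨n, hqn, hn1, hwn, hgn⟩ := ih
      have hn2 : 2 ≤ n := by
        by_contra hlt
        have : n = 1 := by omega
        rw [this] at hwn
        simp [hw0] at hwn
      obtain ⟨hc1, hc2⟩ := hpart1 n hn1 hwn hgn
      have hmul : 2 * (n - 1) ≤ k * (n - 1) := Nat.mul_le_mul_right (n - 1) hk
      have hbig : n + 1 ≤ k * (n - 1) + j := by omega
      refine ⟨k * (n - 1) + j, by omega, by omega, ?_, hc2⟩
      exact hc1
  intro N
  obtain ⟨n, h1, _, _, h4⟩ := claim N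
  exact ⟨n, h1, h4⟩
end
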